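/- Let P and Q be PMFs on a finite set X and let α > 0, α ≠ 1. Define the transformed PMFs P̂(x) = P(x)^α / Σ_{x'} P(x')^α and Q̂(x) = Q(x)^α / Σ_{x'} Q(x')^α. Then the relative α-entropy equals the Rényi divergence of order 1/α between the transformed PMFs: Δ_α(P‖Q) = D_{1/α}(P̂‖Q̂). -/

import Mathlib

open scoped ENNReal

/-- `P` is a probability mass function on the finite type `X` (values in `ℝ≥0∞`, so the
conventions `0/0 = 0` and `p/0 = ∞` can be expressed exactly). -/
def IsPMF {X : Type*} [Fintype X] (P : X → ℝ≥0∞) : Prop :=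
  ∑ x, P x = 1

/-- Base-2 logarithm of an extended nonnegative real, with values in `EReal`
(`log₂ 0 = ⊥`, `log₂ ∞ = ⊤`). -/
noncomputable def elogb2 (s : ℝ≥0∞) : EReal :=
  (((Real.log 2)⁻¹ : ℝ) : EReal) * ENNReal.log s

/-- Relative `α`-entropy `Δ_α(P‖Q)` with values in `EReal`; the `ℝ≥0∞` conventions
`0 ^ y = ∞` for `y < 0` and `0 * ∞ = 0` match the conventions `0/0 = 0`, `p/0 = ∞`. -/
noncomputable def relAlphaEntropy {X : Type*} [Fintype X] (α : ℝ) (P Q : X → ℝ≥0∞) : EReal :=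
  ((α / (1 - α) : ℝ) : EReal) * elogb2 (∑ x, P x * Q x ^ (α - 1))
    + elogb2 (∑ x, Q x ^ α)
    - (((1 - α)⁻¹ : ℝ) : EReal) * elogb2 (∑ x, P x ^ α)

/-- Rényi divergence `D_β(P‖Q)` with values in `EReal`; the `ℝ≥0∞` conventions match
the conventions `0/0 = 0`, `p/0 = ∞`. -/
noncomputable def renyiDiv {X : Type*} [Fintype X] (β : ℝ) (P Q : X → ℝ≥0∞) : EReal :=
  (((β - 1)⁻¹ : ℝ) : EReal) * elogb2 (∑ x, P x ^ β * Q x ^ (1 - β))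

/-- The `α`-transform of a PMF: `Q̂(x) = Q(x)^α / Σ_{x'} Q(x')^α`. -/
noncomputable def alphaTransform {X : Type*} [Fintype X] (α : ℝ) (Q : X → ℝ≥0∞) :
    X → ℝ≥0∞ :=
  fun x => Q x ^ α / ∑ x', Q x' ^ α

/-! The `α`-transforms raise to the powers `1/α` and `1 - 1/α` as
`P̂ ^ (1/α) = P / (∑ P^α)^(1/α)` and `Q̂ ^ (1 - 1/α) = Q^(α-1) / (∑ Q^α)^(1 - 1/α)`, so the Rényi
sum of `P̂, Q̂` is `∑ P Q^(α-1)` divided by a normalising constant that is positive and finite.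
Taking `log₂` splits that constant off as a real number, and `(1/α - 1)⁻¹ = α/(1-α)` turns the
result into `Δ_α(P‖Q)`. No case analysis on `∑ P Q^(α-1) ∈ {0, ∞}` is needed, because in `EReal`
multiplication by a real number distributes over adding a real number. -/

namespace EReal

lemma coe_mul_add_coe (c r : ℝ) (x : EReal) : (c : EReal) * (x + r) = c * x + (c * r : ℝ) := by
  induction x with
  | coe x => norm_cast; rw [mul_add]
  | bot =>
    rcases lt_trichotomy c 0 with hc | rfl | hc
    · rw [bot_add, coe_mul_bot_of_neg hc, top_add_coe]
    · simp
    · rw [bot_add, coe_mul_bot_of_pos hc, bot_add]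
  | top =>
    rcases lt_trichotomy c 0 with hc | rfl | hc
    · rw [top_add_coe, coe_mul_top_of_neg hc, bot_add]
    · simp
    · rw [top_add_coe, coe_mul_top_of_pos hc, top_add_coe]

end EReal

section elogb2

variable (a b : ℝ≥0∞)

lemma elogb2_mul : elogb2 (a * b) = elogb2 a + elogb2 b := by
  rw [elogb2, ENNReal.log_mul_add,
    EReal.left_distrib_of_nonneg_of_ne_top (by positivity) (EReal.coe_ne_top _)]
  rfl

lemma elogb2_inv : elogb2 a⁻¹ = -elogb2 a := by
  rw [elogb2, ENNReal.log_inv, mul_neg]; rfl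

lemma elogb2_rpow (r : ℝ) : elogb2 (a ^ r) = r * elogb2 a := by
  rw [elogb2, ENNReal.log_rpow, mul_left_comm]; rfl

variable {a} in
lemma elogb2_of_ne_zero_of_ne_top (h0 : a ≠ 0) (htop : a ≠ ⊤) :
    elogb2 a = (Real.logb 2 a.toReal : ℝ) := by
  rw [elogb2, ENNReal.log_pos_real h0 htop, ← EReal.coe_mul, Real.logb, inv_mul_eq_div]

end elogb2

namespace IsPMF

variable {X : Type*} [Fintype X] {P : X → ℝ≥0∞}

lemma le_one (hP : IsPMF P) (x : X) : P x ≤ 1 :=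
  hP ▸ Finset.single_le_sum (fun _ _ => zero_le) (Finset.mem_univ x)

lemma ne_top (hP : IsPMF P) (x : X) : P x ≠ ⊤ :=
  ((hP.le_one x).trans_lt ENNReal.one_lt_top).ne

lemma sum_rpow_ne_zero (hP : IsPMF P) {α : ℝ} (hα : 0 < α) : ∑ x, P x ^ α ≠ 0 := by
  intro h
  have : ∑ x, P x = 0 := Finset.sum_eq_zero fun x _ =>
    (ENNReal.rpow_eq_zero_iff_of_pos hα).mp (Finset.sum_eq_zero_iff.mp h x (Finset.mem_univ x))
  exact one_ne_zero ((Eq.symm hP).trans this)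

lemma sum_rpow_ne_top (hP : IsPMF P) {α : ℝ} (hα : 0 ≤ α) : ∑ x, P x ^ α ≠ ⊤ :=
  ENNReal.sum_ne_top.mpr fun x _ =>
    ((ENNReal.rpow_le_one (hP.le_one x) hα).trans_lt ENNReal.one_lt_top).ne

end IsPMF

section alphaTransform

variable {X : Type*} [Fintype X] {α : ℝ} {P Q : X → ℝ≥0∞}

lemma alphaTransform_rpow (hα : 0 ≤ α) {x : X} (hQx : Q x ≠ ⊤) (hQ : ∑ x', Q x' ^ α ≠ 0)
    (r : ℝ) :
    alphaTransform α Q x ^ r = Q x ^ (α * r) * ((∑ x', Q x' ^ α) ^ r)⁻¹ := by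
  rw [alphaTransform, div_eq_mul_inv, ENNReal.mul_rpow_of_ne_top
    (ENNReal.rpow_ne_top_of_nonneg hα hQx) (ENNReal.inv_ne_top.mpr hQ), ENNReal.inv_rpow,
    ← ENNReal.rpow_mul]

lemma sum_alphaTransform_rpow_mul_rpow (hα : 0 ≤ α) (hP : ∀ x, P x ≠ ⊤) (hQ : ∀ x, Q x ≠ ⊤)
    (hSP : ∑ x, P x ^ α ≠ 0) (hSQ : ∑ x, Q x ^ α ≠ 0) (β : ℝ) :
    ∑ x, alphaTransform α P x ^ β * alphaTransform α Q x ^ (1 - β) =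
      (∑ x, P x ^ (α * β) * Q x ^ (α * (1 - β))) *
        (((∑ x, P x ^ α) ^ β)⁻¹ * ((∑ x, Q x ^ α) ^ (1 - β))⁻¹) := by
  simp_rw [alphaTransform_rpow hα (hP _) hSP, alphaTransform_rpow hα (hQ _) hSQ, Finset.sum_mul]
  exact Finset.sum_congr rfl fun x _ => by ring

end alphaTransform

/-- `Δ_α(P‖Q) = D_{1/α}(P̂‖Q̂)`, where `P̂` and `Q̂` are the `α`-transforms
of `P` and `Q`. -/
theorem relAlphaEntropy_eq_renyiDiv_transform
    {X : Type*} [Fintype X] (P Q : X → ℝ≥0∞) (hP : IsPMF P) (hQ : IsPMF Q)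
    (α : ℝ) (hα : 0 < α) (hα1 : α ≠ 1) :
    relAlphaEntropy α P Q = renyiDiv (1 / α) (alphaTransform α P) (alphaTransform α Q) := by
  have hSP := hP.sum_rpow_ne_zero hα
  have hSQ := hQ.sum_rpow_ne_zero hα
  rw [renyiDiv, sum_alphaTransform_rpow_mul_rpow hα.le hP.ne_top hQ.ne_top hSP hSQ,
    mul_sub, mul_one, mul_one_div_cancel hα.ne']
  simp only [ENNReal.rpow_one]
  rw [elogb2_mul, elogb2_mul, elogb2_inv, elogb2_inv, elogb2_rpow, elogb2_rpow,
    relAlphaEntropy, elogb2_of_ne_zero_of_ne_top hSP (hP.sum_rpow_ne_top hα.le),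
    elogb2_of_ne_zero_of_ne_top hSQ (hQ.sum_rpow_ne_top hα.le)]
  have hc : (1 / α - 1)⁻¹ = α / (1 - α) := by field_simp
  generalize elogb2 _ = L
  generalize Real.logb 2 (∑ x, P x ^ α).toReal = a
  generalize Real.logb 2 (∑ x, Q x ^ α).toReal = b
  rw [hc, ← EReal.coe_mul, ← EReal.coe_mul, ← EReal.coe_mul, ← EReal.coe_neg, ← EReal.coe_neg,
    ← EReal.coe_add, EReal.coe_mul_add_coe, sub_eq_add_neg, add_assoc, ← EReal.coe_neg,
    ← EReal.coe_add]
  congr 2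
  field_simp
  ring
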